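/- Let n = p+q ≥ 2, ℏ ∈ ℝ, and let λ, μ ∈ ℝ satisfy λ + μ = 1 and δ = μ−λ ∉ {2/n, (n+2)/(2n), 1, (n+1)/n, (n+2)/n}. For a second-order symbol P = (P₂,P₁,P₀) with real smooth coefficients, let A = Q_{λ,μ;ℏ}(P) be the complex differential operator A f = −ℏ²( P₂^{ij}∂_i∂_j f + (β₁∂_jP₂^{ij} + β₂ g^{ij}g_{kℓ}∂_jP₂^{kℓ})∂_i f + (β₃∂_i∂_jP₂^{ij} + β₄ g^{ij}g_{kℓ}∂_i∂_jP₂^{kℓ}) f ) + iℏ( P₁^i∂_i f + α(∂_iP₁^i) f ) + P₀ f, with α, β₁, β₂, β₃, β₄ the conformally equivariant coefficients. Then A is symmetric (formally self-adjoint): for all compactly supported smooth complex-valued functions φ, ψ on ℝⁿ, ∫_{ℝⁿ} conj(Aφ) ψ dx = ∫_{ℝⁿ} conj(φ) Aψ dx. -/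

import Mathlib

open scoped BigOperators

noncomputable section

/-- Partial derivative of a function on `ℝⁿ` in the `i`-th coordinate direction. -/
def pd {n : ℕ} (i : Fin n) (f : (Fin n → ℝ) → ℝ) : (Fin n → ℝ) → ℝ :=
  fun x => fderiv ℝ f x (Pi.single i 1)

/-- Diagonal entries of the flat metric of signature `(p, n−p)`. -/
def sgn (p : ℕ) {n : ℕ} (i : Fin n) : ℝ := if (i : ℕ) < p then 1 else -1

/-- Flat metric `g_{ij} = g^{ij} = diag(1,…,1,−1,…,−1)`. -/
def gmet (p : ℕ) {n : ℕ} (i j : Fin n) : ℝ := if i = j then sgn p i else 0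

/-- Divergence of a vector field on `ℝⁿ`. -/
def divg {n : ℕ} (X : Fin n → (Fin n → ℝ) → ℝ) : (Fin n → ℝ) → ℝ :=
  fun x => ∑ k, pd k (X k) x

/-- Lie derivative of a weight-`l` density (in the trivialization). -/
def lieF {n : ℕ} (X : Fin n → (Fin n → ℝ) → ℝ) (l : ℝ) (f : (Fin n → ℝ) → ℝ) :
    (Fin n → ℝ) → ℝ :=
  fun x => (∑ k, X k x * pd k f x) + l * divg X x * f x

/-- Weight-`d` action of a vector field on the degree-2 component of a symbol. -/
def lieS2 {n : ℕ} (X : Fin n → (Fin n → ℝ) → ℝ) (d : ℝ)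
    (P2 : Fin n → Fin n → (Fin n → ℝ) → ℝ) : Fin n → Fin n → (Fin n → ℝ) → ℝ :=
  fun i j x => (∑ k, X k x * pd k (P2 i j) x) - (∑ k, P2 k j x * pd k (X i) x)
    - (∑ k, P2 i k x * pd k (X j) x) + d * divg X x * P2 i j x

/-- Weight-`d` action of a vector field on the degree-1 component of a symbol. -/
def lieS1 {n : ℕ} (X : Fin n → (Fin n → ℝ) → ℝ) (d : ℝ)
    (P1 : Fin n → (Fin n → ℝ) → ℝ) : Fin n → (Fin n → ℝ) → ℝ :=
  fun i x => (∑ k, X k x * pd k (P1 i) x) - (∑ k, P1 k x * pd k (X i) x)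
    + d * divg X x * P1 i x

/-- The second-order differential operator with coefficients `(A2, A1, A0)`. -/
def op2 {n : ℕ} (A2 : Fin n → Fin n → (Fin n → ℝ) → ℝ) (A1 : Fin n → (Fin n → ℝ) → ℝ)
    (A0 : (Fin n → ℝ) → ℝ) (f : (Fin n → ℝ) → ℝ) : (Fin n → ℝ) → ℝ :=
  fun x => (∑ i, ∑ j, A2 i j x * pd i (pd j f) x) + (∑ i, A1 i x * pd i f x) + A0 x * f x

/-- Partial derivative of a complex-valued function on `ℝⁿ`. -/
def pdC {n : ℕ} (i : Fin n) (f : (Fin n → ℝ) → ℂ) : (Fin n → ℝ) → ℂ :=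
  fun x => fderiv ℝ f x (Pi.single i 1)

/-- The conformally equivariant quantization `Q_{λ,μ;ℏ}` of a real second-order
symbol `(P₂,P₁,P₀)`, acting on complex-valued functions. -/
def Qhbar (p : ℕ) {n : ℕ} (hb a b1 b2 b3 b4 : ℝ)
    (P2 : Fin n → Fin n → (Fin n → ℝ) → ℝ) (P1 : Fin n → (Fin n → ℝ) → ℝ)
    (P0 : (Fin n → ℝ) → ℝ) (f : (Fin n → ℝ) → ℂ) : (Fin n → ℝ) → ℂ :=
  fun x => -(hb : ℂ) ^ 2 *
      ((∑ i, ∑ j, (P2 i j x : ℂ) * pdC i (pdC j f) x)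
        + (∑ i, ((b1 * (∑ j, pd j (P2 i j) x)
            + b2 * (∑ j, ∑ k, ∑ l, gmet p i j * gmet p k l * pd j (P2 k l) x) : ℝ) : ℂ)
            * pdC i f x)
        + ((b3 * (∑ i, ∑ j, pd i (pd j (P2 i j)) x)
            + b4 * (∑ i, ∑ j, ∑ k, ∑ l,
                gmet p i j * gmet p k l * pd i (pd j (P2 k l)) x) : ℝ) : ℂ) * f x)
    + Complex.I * (hb : ℂ) *
      ((∑ i, (P1 i x : ℂ) * pdC i f x) + ((a * ∑ i, pd i (P1 i) x : ℝ) : ℂ) * f x)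
    + (P0 x : ℂ) * f x

open MeasureTheory

variable {n : ℕ}

lemma contDiff_pd {f : (Fin n → ℝ) → ℝ} (hf : ContDiff ℝ (⊤ : ℕ∞) f) (i : Fin n) :
    ContDiff ℝ (⊤ : ℕ∞) (pd i f) :=
  (hf.fderiv_right (by simp)).clm_apply contDiff_const

lemma contDiff_pdC {f : (Fin n → ℝ) → ℂ} (hf : ContDiff ℝ (⊤ : ℕ∞) f) (i : Fin n) :
    ContDiff ℝ (⊤ : ℕ∞) (pdC i f) :=
  (hf.fderiv_right (by simp)).clm_apply contDiff_const

lemma pdC_conj {f : (Fin n → ℝ) → ℂ} {x : Fin n → ℝ} (hf : DifferentiableAt ℝ f x) (i : Fin n) :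
    pdC i (fun y => (starRingEnd ℂ) (f y)) x = (starRingEnd ℂ) (pdC i f x) := by
  have h : fderiv ℝ (fun y => Complex.conjCLE (f y)) x
      = (Complex.conjCLE : ℂ ≃L[ℝ] ℂ).toContinuousLinearMap.comp (fderiv ℝ f x) :=
    (Complex.conjCLE.toContinuousLinearMap.hasFDerivAt.comp x hf.hasFDerivAt).fderiv
  simpa [pdC] using congrArg (fun L => L (Pi.single i 1)) h

lemma pdC_ofReal {r : (Fin n → ℝ) → ℝ} {x : Fin n → ℝ} (hr : DifferentiableAt ℝ r x) (i : Fin n) :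
    pdC i (fun y => ((r y : ℝ) : ℂ)) x = ((pd i r x : ℝ) : ℂ) := by
  have h : fderiv ℝ (fun y => Complex.ofRealCLM (r y)) x
      = Complex.ofRealCLM.comp (fderiv ℝ r x) :=
    (Complex.ofRealCLM.hasFDerivAt.comp x hr.hasFDerivAt).fderiv
  simpa [pdC, pd] using congrArg (fun L => L (Pi.single i 1)) h

lemma pdC_mul {f g : (Fin n → ℝ) → ℂ} {x : Fin n → ℝ} (hf : DifferentiableAt ℝ f x)
    (hg : DifferentiableAt ℝ g x) (i : Fin n) :
    pdC i (fun y => f y * g y) x = pdC i f x * g x + f x * pdC i g x := by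
  have h := fderiv_fun_mul hf hg
  have := congrArg (fun L => L (Pi.single i 1)) h
  simp only [ContinuousLinearMap.add_apply, ContinuousLinearMap.smul_apply, smul_eq_mul] at this
  simp only [pdC]
  rw [this]; ring

lemma pdC_sum {s : Finset (Fin n)} {F : Fin n → (Fin n → ℝ) → ℂ} {x : Fin n → ℝ}
    (hF : ∀ j ∈ s, DifferentiableAt ℝ (F j) x) (i : Fin n) :
    pdC i (fun y => ∑ j ∈ s, F j y) x = ∑ j ∈ s, pdC i (F j) x := by
  have h := fderiv_fun_sum hF
  have := congrArg (fun L => L (Pi.single i 1)) h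
  simpa [pdC] using this

lemma pdC_sub {f g : (Fin n → ℝ) → ℂ} {x : Fin n → ℝ} (hf : DifferentiableAt ℝ f x)
    (hg : DifferentiableAt ℝ g x) (i : Fin n) :
    pdC i (fun y => f y - g y) x = pdC i f x - pdC i g x := by
  have h := fderiv_fun_sub hf hg
  have := congrArg (fun L => L (Pi.single i 1)) h
  simpa [pdC] using this

lemma pdC_const_mul {f : (Fin n → ℝ) → ℂ} {x : Fin n → ℝ} (hf : DifferentiableAt ℝ f x)
    (c : ℂ) (i : Fin n) :
    pdC i (fun y => c * f y) x = c * pdC i f x := by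
  have h := fderiv_const_mul hf c
  have := congrArg (fun L => L (Pi.single i 1)) h
  simpa [pdC] using this

lemma contDiff_ofReal_comp {f : (Fin n → ℝ) → ℝ} (hf : ContDiff ℝ (⊤ : ℕ∞) f) :
    ContDiff ℝ (⊤ : ℕ∞) (fun y => ((f y : ℝ) : ℂ)) := Complex.ofRealCLM.contDiff.comp hf

def Wf {n : ℕ} (hb : ℝ) (P2 : Fin n → Fin n → (Fin n → ℝ) → ℝ)
    (P1 : Fin n → (Fin n → ℝ) → ℝ) (u ψ : (Fin n → ℝ) → ℂ) (i : Fin n) :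
    (Fin n → ℝ) → ℂ :=
  fun y => -(hb : ℂ) ^ 2 * ((∑ j, (P2 i j y : ℂ) * pdC j u y) * ψ y
      - u y * (∑ j, (P2 i j y : ℂ) * pdC j ψ y))
    - Complex.I * (hb : ℂ) * ((P1 i y : ℂ) * (u y * ψ y))

lemma contDiff_S {P2row : Fin n → (Fin n → ℝ) → ℝ} (hP : ∀ j, ContDiff ℝ (⊤ : ℕ∞) (P2row j))
    {u : (Fin n → ℝ) → ℂ} (hu : ContDiff ℝ (⊤ : ℕ∞) u) :
    ContDiff ℝ (⊤ : ℕ∞) (fun y => ∑ j, (P2row j y : ℂ) * pdC j u y) :=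
  ContDiff.sum fun j _ => (contDiff_ofReal_comp (hP j)).mul (contDiff_pdC hu j)

lemma pdC_S {P2row : Fin n → (Fin n → ℝ) → ℝ} (hP : ∀ j, ContDiff ℝ (⊤ : ℕ∞) (P2row j))
    {u : (Fin n → ℝ) → ℂ} (hu : ContDiff ℝ (⊤ : ℕ∞) u) (i : Fin n) (x : Fin n → ℝ) :
    pdC i (fun y => ∑ j, (P2row j y : ℂ) * pdC j u y) x
      = (∑ j, ((pd i (P2row j) x : ℝ) : ℂ) * pdC j u x)
        + ∑ j, (P2row j x : ℂ) * pdC i (pdC j u) x := by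
  rw [pdC_sum (fun j _ =>
    (((contDiff_ofReal_comp (hP j)).differentiable (by simp)).differentiableAt).fun_mul
      (((contDiff_pdC hu j).differentiable (by simp)).differentiableAt)) i]
  rw [← Finset.sum_add_distrib]
  refine Finset.sum_congr rfl fun j _ => ?_
  rw [pdC_mul (((contDiff_ofReal_comp (hP j)).differentiable (by simp)).differentiableAt)
      (((contDiff_pdC hu j).differentiable (by simp)).differentiableAt) i,
    pdC_ofReal (((hP j).differentiable (by simp)).differentiableAt) i]

lemma contDiff_Wf {hb : ℝ} {P2 : Fin n → Fin n → (Fin n → ℝ) → ℝ}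
    {P1 : Fin n → (Fin n → ℝ) → ℝ} {u ψ : (Fin n → ℝ) → ℂ}
    (hP2 : ∀ i j, ContDiff ℝ (⊤ : ℕ∞) (P2 i j)) (hP1 : ∀ i, ContDiff ℝ (⊤ : ℕ∞) (P1 i))
    (hu : ContDiff ℝ (⊤ : ℕ∞) u) (hψ : ContDiff ℝ (⊤ : ℕ∞) ψ) (i : Fin n) :
    ContDiff ℝ (⊤ : ℕ∞) (Wf hb P2 P1 u ψ i) := by
  unfold Wf
  exact (contDiff_const.mul (((contDiff_S (fun j => hP2 i j) hu).mul hψ).sub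
      (hu.mul (contDiff_S (fun j => hP2 i j) hψ)))).sub
    (contDiff_const.mul ((contDiff_ofReal_comp (hP1 i)).mul (hu.mul hψ)))

lemma pdC_Wf {hb : ℝ} {P2 : Fin n → Fin n → (Fin n → ℝ) → ℝ}
    {P1 : Fin n → (Fin n → ℝ) → ℝ} {u ψ : (Fin n → ℝ) → ℂ}
    (hP2 : ∀ i j, ContDiff ℝ (⊤ : ℕ∞) (P2 i j)) (hP1 : ∀ i, ContDiff ℝ (⊤ : ℕ∞) (P1 i))
    (hu : ContDiff ℝ (⊤ : ℕ∞) u) (hψ : ContDiff ℝ (⊤ : ℕ∞) ψ) (i : Fin n) (x : Fin n → ℝ) :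
    pdC i (Wf hb P2 P1 u ψ i) x =
      -(hb : ℂ) ^ 2 * (((∑ j, ((pd i (P2 i j) x : ℝ) : ℂ) * pdC j u x)
            + ∑ j, (P2 i j x : ℂ) * pdC i (pdC j u) x) * ψ x
        + (∑ j, (P2 i j x : ℂ) * pdC j u x) * pdC i ψ x
        - (pdC i u x * (∑ j, (P2 i j x : ℂ) * pdC j ψ x)
          + u x * ((∑ j, ((pd i (P2 i j) x : ℝ) : ℂ) * pdC j ψ x)
            + ∑ j, (P2 i j x : ℂ) * pdC i (pdC j ψ) x)))
      - Complex.I * (hb : ℂ) * (((pd i (P1 i) x : ℝ) : ℂ) * (u x * ψ x)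
        + (P1 i x : ℂ) * (pdC i u x * ψ x + u x * pdC i ψ x)) := by
  have hud : DifferentiableAt ℝ u x := ((hu.differentiable (by simp)) x)
  have hψd : DifferentiableAt ℝ ψ x := ((hψ.differentiable (by simp)) x)
  have hS : DifferentiableAt ℝ (fun y => ∑ j, (P2 i j y : ℂ) * pdC j u y) x :=
    ((contDiff_S (fun j => hP2 i j) hu).differentiable (by simp)) x
  have hT : DifferentiableAt ℝ (fun y => ∑ j, (P2 i j y : ℂ) * pdC j ψ y) x :=
    ((contDiff_S (fun j => hP2 i j) hψ).differentiable (by simp)) x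
  have hP1d : DifferentiableAt ℝ (fun y => ((P1 i y : ℝ) : ℂ)) x :=
    ((contDiff_ofReal_comp (hP1 i)).differentiable (by simp)) x
  have hF : DifferentiableAt ℝ
      (fun y => (∑ j, (P2 i j y : ℂ) * pdC j u y) * ψ y
        - u y * (∑ j, (P2 i j y : ℂ) * pdC j ψ y)) x :=
    ((hS.mul hψd).sub (hud.mul hT))
  have hG : DifferentiableAt ℝ (fun y => ((P1 i y : ℝ) : ℂ) * (u y * ψ y)) x :=
    hP1d.mul (hud.mul hψd)
  unfold Wf
  rw [pdC_sub ((differentiableAt_const _).fun_mul hF) ((differentiableAt_const _).fun_mul hG) i,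
    pdC_const_mul hF (-(hb : ℂ) ^ 2) i, pdC_const_mul hG (Complex.I * (hb : ℂ)) i,
    pdC_sub (hS.fun_mul hψd) (hud.fun_mul hT) i,
    pdC_mul hS hψd i, pdC_mul hud hT i,
    pdC_mul hP1d (hud.fun_mul hψd) i, pdC_mul hud hψd i,
    pdC_S (fun j => hP2 i j) hu i x, pdC_S (fun j => hP2 i j) hψ i x,
    pdC_ofReal (((hP1 i).differentiable (by simp)).differentiableAt) i]

lemma sumswap (f : Fin n → Fin n → ℂ) :
    ∑ i, ∑ j, f i j = ∑ i : Fin n, ∑ j, f j i := Finset.sum_comm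

lemma div_id (p : ℕ) (hb b3 b4 : ℝ) (P2 : Fin n → Fin n → (Fin n → ℝ) → ℝ)
    (P1 : Fin n → (Fin n → ℝ) → ℝ) (P0 : (Fin n → ℝ) → ℝ)
    (hP2 : ∀ i j, ContDiff ℝ (⊤ : ℕ∞) (P2 i j)) (hP2sym : ∀ i j, P2 i j = P2 j i)
    (hP1 : ∀ i, ContDiff ℝ (⊤ : ℕ∞) (P1 i))
    (u ψ : (Fin n → ℝ) → ℂ) (hu : ContDiff ℝ (⊤ : ℕ∞) u) (hψ : ContDiff ℝ (⊤ : ℕ∞) ψ)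
    (x : Fin n → ℝ) :
    Qhbar p (-hb) (1/2) 1 0 b3 b4 P2 P1 P0 u x * ψ x
      - u x * Qhbar p hb (1/2) 1 0 b3 b4 P2 P1 P0 ψ x
      = ∑ i, pdC i (Wf hb P2 P1 u ψ i) x := by
  rw [Finset.sum_congr rfl fun i _ => pdC_Wf hP2 hP1 hu hψ i x]
  simp only [Qhbar, one_mul, zero_mul, add_zero]
  push_cast
  simp only [Finset.sum_mul, Finset.mul_sum, mul_add, add_mul, mul_sub, sub_mul,
    Finset.sum_add_distrib, Finset.sum_sub_distrib, neg_mul, mul_neg, neg_neg]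
  ring_nf
  simp only [Finset.sum_neg_distrib]
  have E1 : ∑ a : Fin n, ∑ b : Fin n, (hb:ℂ) ^ 2 * ((pd b (P2 a b) x : ℝ):ℂ) * pdC a u x * ψ x
      = ∑ a : Fin n, ∑ b : Fin n, (hb:ℂ) ^ 2 * ((pd a (P2 a b) x : ℝ):ℂ) * pdC b u x * ψ x := by
    rw [sumswap (fun a b => (hb:ℂ) ^ 2 * ((pd b (P2 a b) x : ℝ):ℂ) * pdC a u x * ψ x)]
    exact Finset.sum_congr rfl fun a _ => Finset.sum_congr rfl fun b _ => by rw [hP2sym b a]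
  have E2 : ∑ a : Fin n, ∑ b : Fin n, (hb:ℂ) ^ 2 * u x * ((pd b (P2 a b) x : ℝ):ℂ) * pdC a ψ x
      = ∑ a : Fin n, ∑ b : Fin n, (hb:ℂ) ^ 2 * u x * ((pd a (P2 a b) x : ℝ):ℂ) * pdC b ψ x := by
    rw [sumswap (fun a b => (hb:ℂ) ^ 2 * u x * ((pd b (P2 a b) x : ℝ):ℂ) * pdC a ψ x)]
    exact Finset.sum_congr rfl fun a _ => Finset.sum_congr rfl fun b _ => by rw [hP2sym b a]
  have E3 : ∑ a : Fin n, ∑ b : Fin n, (hb:ℂ) ^ 2 * (b3:ℂ) * ((pd a (pd b (P2 a b)) x : ℝ):ℂ) * u x * ψ x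
      = ∑ a : Fin n, ∑ b : Fin n, (hb:ℂ) ^ 2 * (b3:ℂ) * u x * ((pd a (pd b (P2 a b)) x : ℝ):ℂ) * ψ x :=
    Finset.sum_congr rfl fun a _ => Finset.sum_congr rfl fun b _ => by ring
  have E4 : ∑ a : Fin n, ∑ b : Fin n, ∑ c : Fin n, ∑ d : Fin n,
        (hb:ℂ) ^ 2 * (b4:ℂ) * ((gmet p a b : ℝ):ℂ) * ((gmet p c d : ℝ):ℂ) * ((pd a (pd b (P2 c d)) x : ℝ):ℂ) * u x * ψ x
      = ∑ a : Fin n, ∑ b : Fin n, ∑ c : Fin n, ∑ d : Fin n,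
        (hb:ℂ) ^ 2 * (b4:ℂ) * u x * ((gmet p a b : ℝ):ℂ) * ((gmet p c d : ℝ):ℂ) * ((pd a (pd b (P2 c d)) x : ℝ):ℂ) * ψ x :=
    Finset.sum_congr rfl fun a _ => Finset.sum_congr rfl fun b _ =>
      Finset.sum_congr rfl fun c _ => Finset.sum_congr rfl fun d _ => by ring
  have E5 : ∑ a : Fin n, ∑ b : Fin n, (hb:ℂ) ^ 2 * ((P2 a b x : ℝ):ℂ) * pdC b u x * pdC a ψ x
      = ∑ a : Fin n, ∑ b : Fin n, (hb:ℂ) ^ 2 * pdC a u x * ((P2 a b x : ℝ):ℂ) * pdC b ψ x := by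
    rw [sumswap (fun a b => (hb:ℂ) ^ 2 * ((P2 a b x : ℝ):ℂ) * pdC b u x * pdC a ψ x)]
    exact Finset.sum_congr rfl fun a _ => Finset.sum_congr rfl fun b _ => by rw [hP2sym b a]; ring
  have E6 : ∑ a : Fin n, (hb:ℂ) * Complex.I * (1/2) * ((pd a (P1 a) x : ℝ):ℂ) * u x * ψ x
      = (1/2 : ℂ) * ∑ a : Fin n, (hb:ℂ) * Complex.I * ((pd a (P1 a) x : ℝ):ℂ) * ψ x * u x := by
    rw [Finset.mul_sum]
    exact Finset.sum_congr rfl fun a _ => by ring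
  have E7 : ∑ a : Fin n, (hb:ℂ) * Complex.I * u x * (1/2) * ((pd a (P1 a) x : ℝ):ℂ) * ψ x
      = (1/2 : ℂ) * ∑ a : Fin n, (hb:ℂ) * Complex.I * ((pd a (P1 a) x : ℝ):ℂ) * ψ x * u x := by
    rw [Finset.mul_sum]
    exact Finset.sum_congr rfl fun a _ => by ring
  have E8 : ∑ a : Fin n, (hb:ℂ) * Complex.I * u x * ((P1 a x : ℝ):ℂ) * pdC a ψ x
      = ∑ a : Fin n, (hb:ℂ) * Complex.I * ((P1 a x : ℝ):ℂ) * u x * pdC a ψ x :=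
    Finset.sum_congr rfl fun a _ => by ring
  have F1 : ∑ a : Fin n, ∑ b : Fin n, (hb:ℂ) ^ 2 * ((P2 a b x : ℝ):ℂ) * pdC a (pdC b u) x * ψ x
      = ∑ a : Fin n, ∑ b : Fin n, (hb:ℂ) ^ 2 * ψ x * ((P2 a b x : ℝ):ℂ) * pdC a (pdC b u) x :=
    Finset.sum_congr rfl fun a _ => Finset.sum_congr rfl fun b _ => by ring
  have F2 : ∑ a : Fin n, ∑ b : Fin n, (hb:ℂ) ^ 2 * ψ x * ((pd b (P2 a b) x : ℝ):ℂ) * pdC a u x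
      = ∑ a : Fin n, ∑ b : Fin n, (hb:ℂ) ^ 2 * ψ x * ((pd a (P2 a b) x : ℝ):ℂ) * pdC b u x := by
    rw [sumswap (fun a b => (hb:ℂ) ^ 2 * ψ x * ((pd b (P2 a b) x : ℝ):ℂ) * pdC a u x)]
    exact Finset.sum_congr rfl fun a _ => Finset.sum_congr rfl fun b _ => by rw [hP2sym b a]
  have F3 : ∑ a : Fin n, ∑ b : Fin n, (hb:ℂ) ^ 2 * ψ x * (b3:ℂ) * ((pd a (pd b (P2 a b)) x : ℝ):ℂ) * u x
      = ∑ a : Fin n, ∑ b : Fin n, (hb:ℂ) ^ 2 * ψ x * (b3:ℂ) * u x * ((pd a (pd b (P2 a b)) x : ℝ):ℂ) :=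
    Finset.sum_congr rfl fun a _ => Finset.sum_congr rfl fun b _ => by ring
  rw [F1, F2, F3, E2, E5]
  simp only [← Finset.sum_mul]
  ring

lemma conj_Qhbar (p : ℕ) (hb a b1 b2 b3 b4 : ℝ) (P2 : Fin n → Fin n → (Fin n → ℝ) → ℝ)
    (P1 : Fin n → (Fin n → ℝ) → ℝ) (P0 : (Fin n → ℝ) → ℝ)
    (φ : (Fin n → ℝ) → ℂ) (hφ : ContDiff ℝ (⊤ : ℕ∞) φ) (x : Fin n → ℝ) :
    (starRingEnd ℂ) (Qhbar p hb a b1 b2 b3 b4 P2 P1 P0 φ x)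
      = Qhbar p (-hb) a b1 b2 b3 b4 P2 P1 P0 (fun y => (starRingEnd ℂ) (φ y)) x := by
  have h1 : ∀ (j : Fin n) (y : Fin n → ℝ),
      pdC j (fun z => (starRingEnd ℂ) (φ z)) y = (starRingEnd ℂ) (pdC j φ y) :=
    fun j y => pdC_conj ((hφ.differentiable (by simp)) y) j
  have h2 : ∀ (i j : Fin n) (y : Fin n → ℝ),
      pdC i (pdC j (fun z => (starRingEnd ℂ) (φ z))) y
        = (starRingEnd ℂ) (pdC i (pdC j φ) y) := by
    intro i j y
    have e : pdC j (fun z => (starRingEnd ℂ) (φ z)) = fun z => (starRingEnd ℂ) (pdC j φ z) :=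
      funext fun z => h1 j z
    rw [e, pdC_conj (((contDiff_pdC hφ j).differentiable (by simp)) y) i]
  simp only [Qhbar, map_add, map_mul, map_neg, map_pow, map_sum, Complex.conj_ofReal,
    Complex.conj_I, h1, h2]
  push_cast
  ring

lemma contDiff_Qhbar (p : ℕ) (hb a b1 b2 b3 b4 : ℝ) {P2 : Fin n → Fin n → (Fin n → ℝ) → ℝ}
    {P1 : Fin n → (Fin n → ℝ) → ℝ} {P0 : (Fin n → ℝ) → ℝ}
    (hP2 : ∀ i j, ContDiff ℝ (⊤ : ℕ∞) (P2 i j)) (hP1 : ∀ i, ContDiff ℝ (⊤ : ℕ∞) (P1 i))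
    (hP0 : ContDiff ℝ (⊤ : ℕ∞) P0) {f : (Fin n → ℝ) → ℂ} (hf : ContDiff ℝ (⊤ : ℕ∞) f) :
    ContDiff ℝ (⊤ : ℕ∞) (Qhbar p hb a b1 b2 b3 b4 P2 P1 P0 f) := by
  unfold Qhbar
  refine ((contDiff_const.mul ((ContDiff.add ?_ ?_).add (ContDiff.mul ?_ hf))).add
    (contDiff_const.mul (ContDiff.add ?_ (ContDiff.mul ?_ hf)))).add
    ((contDiff_ofReal_comp hP0).mul hf)
  · exact ContDiff.sum fun i _ => ContDiff.sum fun j _ =>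
      (contDiff_ofReal_comp (hP2 i j)).mul (contDiff_pdC (contDiff_pdC hf j) i)
  · exact ContDiff.sum fun i _ =>
      (contDiff_ofReal_comp ((contDiff_const.mul (ContDiff.sum fun j _ =>
          contDiff_pd (hP2 i j) j)).add
        (contDiff_const.mul (ContDiff.sum fun j _ => ContDiff.sum fun k _ =>
          ContDiff.sum fun l _ => contDiff_const.mul (contDiff_pd (hP2 k l) j))))).mul
      (contDiff_pdC hf i)
  · exact contDiff_ofReal_comp ((contDiff_const.mul (ContDiff.sum fun i _ =>
        ContDiff.sum fun j _ => contDiff_pd (contDiff_pd (hP2 i j) j) i)).add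
      (contDiff_const.mul (ContDiff.sum fun i _ => ContDiff.sum fun j _ =>
        ContDiff.sum fun k _ => ContDiff.sum fun l _ =>
          contDiff_const.mul (contDiff_pd (contDiff_pd (hP2 k l) j) i))))
  · exact ContDiff.sum fun i _ => (contDiff_ofReal_comp (hP1 i)).mul (contDiff_pdC hf i)
  · exact contDiff_ofReal_comp (contDiff_const.mul (ContDiff.sum fun i _ =>
      contDiff_pd (hP1 i) i))

lemma integral_pd_eq_zero (f : (Fin n → ℝ) → ℝ) (hf : ContDiff ℝ (⊤ : ℕ∞) f)
    (hc : HasCompactSupport f) (i : Fin n) : ∫ x : Fin n → ℝ, pd i f x = 0 := by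
  obtain ⟨C, hC⟩ := (hc.fderiv (𝕜 := ℝ)).exists_bound_of_continuous
    (hf.fderiv_right (m := (⊤ : ℕ∞)) (by simp)).continuous
  have hlip : LipschitzWith (Real.toNNReal C) f := by
    apply lipschitzWith_of_nnnorm_fderiv_le (hf.differentiable (by simp))
    intro x
    have := hC x
    rw [← NNReal.coe_le_coe]
    simpa [Real.coe_toNNReal', le_max_iff] using Or.inl this
  have hz : ∀ x : Fin n → ℝ, lineDeriv ℝ (fun _ : Fin n → ℝ => (1 : ℝ)) x (-(Pi.single i 1)) = 0 := by
    intro x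
    rw [(differentiableAt_const (1 : ℝ)).lineDeriv_eq_fderiv]
    simp
  have h1 : LipschitzWith 0 (fun _ : Fin n → ℝ => (1 : ℝ)) := LipschitzWith.const 1
  have h2 := LipschitzWith.integral_lineDeriv_mul_eq (μ := volume) h1 hlip hc
    (-(Pi.single i 1))
  simp only [hz, zero_mul, integral_zero, mul_one, neg_neg] at h2
  have h3 : ∀ x, lineDeriv ℝ f x (Pi.single i 1) = pd i f x := fun x =>
    ((hf.differentiable (by simp)).differentiableAt).lineDeriv_eq_fderiv
  simp only [h3] at h2
  exact h2.symm

lemma pd_re {f : (Fin n → ℝ) → ℂ} {x : Fin n → ℝ} (hf : DifferentiableAt ℝ f x) (i : Fin n) :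
    pd i (fun y => (f y).re) x = (pdC i f x).re := by
  have h : fderiv ℝ (fun y => Complex.reCLM (f y)) x
      = Complex.reCLM.comp (fderiv ℝ f x) :=
    (Complex.reCLM.hasFDerivAt.comp x hf.hasFDerivAt).fderiv
  simpa [pd, pdC] using congrArg (fun L => L (Pi.single i 1)) h

lemma pd_im {f : (Fin n → ℝ) → ℂ} {x : Fin n → ℝ} (hf : DifferentiableAt ℝ f x) (i : Fin n) :
    pd i (fun y => (f y).im) x = (pdC i f x).im := by
  have h : fderiv ℝ (fun y => Complex.imCLM (f y)) x
      = Complex.imCLM.comp (fderiv ℝ f x) :=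
    (Complex.imCLM.hasFDerivAt.comp x hf.hasFDerivAt).fderiv
  simpa [pd, pdC] using congrArg (fun L => L (Pi.single i 1)) h

lemma hcs_pdC {f : (Fin n → ℝ) → ℂ} (hc : HasCompactSupport f) (i : Fin n) :
    HasCompactSupport (pdC i f) :=
  hc.fderiv_apply (𝕜 := ℝ) (Pi.single i 1)

lemma integrable_pdC {f : (Fin n → ℝ) → ℂ} (hf : ContDiff ℝ (⊤ : ℕ∞) f)
    (hc : HasCompactSupport f) (i : Fin n) : MeasureTheory.Integrable (pdC i f) :=
  ((contDiff_pdC hf i).continuous).integrable_of_hasCompactSupport (hcs_pdC hc i)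

lemma integral_pdC_eq_zero (f : (Fin n → ℝ) → ℂ) (hf : ContDiff ℝ (⊤ : ℕ∞) f)
    (hc : HasCompactSupport f) (i : Fin n) : ∫ x : Fin n → ℝ, pdC i f x = 0 := by
  have hd : Differentiable ℝ f := hf.differentiable (by simp)
  have hint := integrable_pdC hf hc i
  have hre : ∫ x : Fin n → ℝ, pd i (fun y => (f y).re) x = 0 :=
    integral_pd_eq_zero _ (Complex.reCLM.contDiff.comp hf) (hc.comp_left rfl) i
  have him : ∫ x : Fin n → ℝ, pd i (fun y => (f y).im) x = 0 :=
    integral_pd_eq_zero _ (Complex.imCLM.contDiff.comp hf) (hc.comp_left rfl) i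
  apply Complex.ext
  · rw [← RCLike.re_eq_complex_re, ← integral_re hint]
    simp only [RCLike.re_eq_complex_re]
    rw [show (fun x : Fin n → ℝ => (pdC i f x).re) = fun x => pd i (fun y => (f y).re) x
      from funext fun x => (pd_re (hd x) i).symm] at *
    simpa using hre
  · rw [← RCLike.im_eq_complex_im, ← integral_im hint]
    simp only [RCLike.im_eq_complex_im]
    rw [show (fun x : Fin n → ℝ => (pdC i f x).im) = fun x => pd i (fun y => (f y).im) x
      from funext fun x => (pd_im (hd x) i).symm] at *
    simpa using him

lemma hcs_Wf {hb : ℝ} {P2 : Fin n → Fin n → (Fin n → ℝ) → ℝ}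
    {P1 : Fin n → (Fin n → ℝ) → ℝ} {u ψ : (Fin n → ℝ) → ℂ}
    (huc : HasCompactSupport u) (hψc : HasCompactSupport ψ) (i : Fin n) :
    HasCompactSupport (Wf hb P2 P1 u ψ i) := by
  apply HasCompactSupport.intro (huc.union hψc)
  intro y hy
  simp only [Set.mem_union, not_or] at hy
  have hu0 : u y = 0 := image_eq_zero_of_notMem_tsupport hy.1
  have hψ0 : ψ y = 0 := image_eq_zero_of_notMem_tsupport hy.2
  simp [Wf, hu0, hψ0]

/-- for `λ + μ = 1` and non-resonant `δ = μ − λ`, the quantized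
operators are symmetric (formally self-adjoint) for the natural pairing of
compactly supported half-densities. -/
theorem quantization_formally_self_adjoint
    (p q n : ℕ) (hpq : n = p + q) (hn : 2 ≤ n) (hb : ℝ)
    (lam mu dlt : ℝ) (hdlt : dlt = mu - lam) (hsum : lam + mu = 1)
    (hres : dlt ∉ ({2 / (n : ℝ), ((n : ℝ) + 2) / (2 * (n : ℝ)), 1,
      ((n : ℝ) + 1) / (n : ℝ), ((n : ℝ) + 2) / (n : ℝ)} : Set ℝ))
    (a b1 b2 b3 b4 : ℝ)
    (ha : a = lam / (1 - dlt))
    (hb1 : b1 = 2 * ((n : ℝ) * lam + 1) / (2 + (n : ℝ) * (1 - dlt)))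
    (hb2 : b2 = (n : ℝ) * (lam + mu - 1) /
      ((2 + (n : ℝ) * (1 - dlt)) * (2 - (n : ℝ) * dlt)))
    (hb3 : b3 = (n : ℝ) * lam * ((n : ℝ) * lam + 1) /
      ((1 + (n : ℝ) * (1 - dlt)) * (2 + (n : ℝ) * (1 - dlt))))
    (hb4 : b4 = (n : ℝ) * lam *
        ((n : ℝ) ^ 2 * mu * (2 - lam - mu) + 2 * ((n : ℝ) * lam + 1) ^ 2
          - (n : ℝ) * ((n : ℝ) + 1)) /
      ((1 + (n : ℝ) * (1 - dlt)) * (2 + (n : ℝ) * (1 - dlt))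
        * (2 + (n : ℝ) * (1 - 2 * dlt)) * (2 - (n : ℝ) * dlt)))
    (P2 : Fin n → Fin n → (Fin n → ℝ) → ℝ) (P1 : Fin n → (Fin n → ℝ) → ℝ)
    (P0 : (Fin n → ℝ) → ℝ)
    (hP2 : ∀ i j, ContDiff ℝ (⊤ : ℕ∞) (P2 i j)) (hP2sym : ∀ i j, P2 i j = P2 j i)
    (hP1 : ∀ i, ContDiff ℝ (⊤ : ℕ∞) (P1 i)) (hP0 : ContDiff ℝ (⊤ : ℕ∞) P0)
    (φ ψ : (Fin n → ℝ) → ℂ)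
    (hφ : ContDiff ℝ (⊤ : ℕ∞) φ) (hψ : ContDiff ℝ (⊤ : ℕ∞) ψ)
    (hφc : HasCompactSupport φ) (hψc : HasCompactSupport ψ) :
    ∫ x : Fin n → ℝ, (starRingEnd ℂ) (Qhbar p hb a b1 b2 b3 b4 P2 P1 P0 φ x) * ψ x
      = ∫ x : Fin n → ℝ, (starRingEnd ℂ) (φ x) * Qhbar p hb a b1 b2 b3 b4 P2 P1 P0 ψ x := by
  -- coefficient values
  subst hdlt
  have hmu : mu = 1 - lam := by linarith
  subst hmu
  simp only [Set.mem_insert_iff, Set.mem_singleton_iff, not_or] at hres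
  obtain ⟨h1r, h2r, h3r, h4r, h5r⟩ := hres
  have hn0 : (n : ℝ) ≠ 0 := by
    have : 0 < n := by omega
    exact_mod_cast this.ne'
  have hlamne : lam ≠ 0 := by
    intro h
    exact h3r (by rw [h]; ring)
  have hden : (2 : ℝ) + (n : ℝ) * (1 - (1 - lam - lam)) ≠ 0 := by
    intro h
    apply h5r
    field_simp
    linarith
  have ha' : a = 1 / 2 := by
    rw [ha, show (1 : ℝ) - (1 - lam - lam) = 2 * lam by ring, div_eq_iff
      (mul_ne_zero two_ne_zero hlamne)]
    ring
  have hb1' : b1 = 1 := by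
    rw [hb1, show 2 * ((n : ℝ) * lam + 1) = 2 + (n : ℝ) * (1 - (1 - lam - lam)) by ring]
    exact div_self hden
  have hb2' : b2 = 0 := by
    rw [hb2, show lam + (1 - lam) - 1 = 0 by ring]
    simp
  rw [ha', hb1', hb2']
  -- notation
  set u : (Fin n → ℝ) → ℂ := fun y => (starRingEnd ℂ) (φ y) with hu_def
  have huC : ContDiff ℝ (⊤ : ℕ∞) u := Complex.conjCLE.toContinuousLinearMap.contDiff.comp hφ
  have huc : HasCompactSupport u := hφc.comp_left (map_zero (starRingEnd ℂ))
  -- pointwise divergence identity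
  have key : ∀ x : Fin n → ℝ,
      (starRingEnd ℂ) (Qhbar p hb (1/2) 1 0 b3 b4 P2 P1 P0 φ x) * ψ x
        - (starRingEnd ℂ) (φ x) * Qhbar p hb (1/2) 1 0 b3 b4 P2 P1 P0 ψ x
      = ∑ i, pdC i (Wf hb P2 P1 u ψ i) x := by
    intro x
    rw [conj_Qhbar p hb (1/2) 1 0 b3 b4 P2 P1 P0 φ hφ x]
    exact div_id p hb b3 b4 P2 P1 P0 hP2 hP2sym hP1 u ψ huC hψ x
  -- integrability
  have hQφ : ContDiff ℝ (⊤ : ℕ∞) (Qhbar p hb (1/2) 1 0 b3 b4 P2 P1 P0 φ) :=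
    contDiff_Qhbar p hb (1/2) 1 0 b3 b4 hP2 hP1 hP0 hφ
  have hQψ : ContDiff ℝ (⊤ : ℕ∞) (Qhbar p hb (1/2) 1 0 b3 b4 P2 P1 P0 ψ) :=
    contDiff_Qhbar p hb (1/2) 1 0 b3 b4 hP2 hP1 hP0 hψ
  have hint1 : Integrable
      (fun x : Fin n → ℝ => (starRingEnd ℂ) (Qhbar p hb (1/2) 1 0 b3 b4 P2 P1 P0 φ x) * ψ x) := by
    apply Continuous.integrable_of_hasCompactSupport
    · exact (Complex.continuous_conj.comp hQφ.continuous).mul hψ.continuous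
    · apply HasCompactSupport.intro hψc
      intro y hy
      simp [image_eq_zero_of_notMem_tsupport hy]
  have hint2 : Integrable
      (fun x : Fin n → ℝ => (starRingEnd ℂ) (φ x) * Qhbar p hb (1/2) 1 0 b3 b4 P2 P1 P0 ψ x) := by
    apply Continuous.integrable_of_hasCompactSupport
    · exact (Complex.continuous_conj.comp hφ.continuous).mul hQψ.continuous
    · apply HasCompactSupport.intro hφc
      intro y hy
      simp [image_eq_zero_of_notMem_tsupport hy]
  have h0 : (∫ x : Fin n → ℝ,
      ((starRingEnd ℂ) (Qhbar p hb (1/2) 1 0 b3 b4 P2 P1 P0 φ x) * ψ x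
        - (starRingEnd ℂ) (φ x) * Qhbar p hb (1/2) 1 0 b3 b4 P2 P1 P0 ψ x)) = 0 := by
    rw [show (fun x : Fin n → ℝ =>
        (starRingEnd ℂ) (Qhbar p hb (1/2) 1 0 b3 b4 P2 P1 P0 φ x) * ψ x
          - (starRingEnd ℂ) (φ x) * Qhbar p hb (1/2) 1 0 b3 b4 P2 P1 P0 ψ x)
      = fun x => ∑ i, pdC i (Wf hb P2 P1 u ψ i) x from funext key]
    rw [integral_finset_sum Finset.univ (fun i _ =>
      integrable_pdC (contDiff_Wf hP2 hP1 huC hψ i) (hcs_Wf huc hψc i) i)]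
    exact Finset.sum_eq_zero fun i _ =>
      integral_pdC_eq_zero _ (contDiff_Wf hP2 hP1 huC hψ i) (hcs_Wf huc hψc i) i
  rw [integral_sub hint1 hint2] at h0
  exact sub_eq_zero.mp h0
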